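/- Let S be a spider with q ≥ 3 legs all of length 2 (so n = 2q+1 vertices). Then every 3-rainbow separating path system of S, in which every edge is covered by paths of at least two distinct colors, has size at least 17(n−1)/16; consequently c_3(S) ≥ 17(n−1)/16 − 3. -/

import Mathlib

open SimpleGraph

/-- A path in a graph `G`: a walk that is a path, with its endpoints. -/
structure GPath {V : Type*} (G : SimpleGraph V) where
  a : V
  b : V
  walk : G.Walk a b
  isPath : walk.IsPath

/-- `P` is a `k`-rainbow separating path system of `G`: every pair of distinct
edges is separated by two paths of distinct colors. -/
def IsRSPS {V : Type*} (G : SimpleGraph V) (k : ℕ)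
    (P : Multiset (GPath G × Fin k)) : Prop :=
  ∀ e f : Sym2 V, e ∈ G.edgeSet → f ∈ G.edgeSet → e ≠ f →
    ∃ p ∈ P, ∃ q ∈ P, p.2 ≠ q.2 ∧
      e ∈ p.1.walk.edges ∧ f ∉ p.1.walk.edges ∧
      f ∈ q.1.walk.edges ∧ e ∉ q.1.walk.edges

/-- The `k`-rainbow separation number `c_k(G)`. -/
noncomputable def cRSPS {V : Type*} (G : SimpleGraph V) (k : ℕ) : ℕ :=
  sInf {m | ∃ P : Multiset (GPath G × Fin k), IsRSPS G k P ∧ Multiset.card P = m}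

/-- `P` is a weakly separating path system of `G`. -/
def IsWeakSep {V : Type*} (G : SimpleGraph V) (P : Multiset (GPath G)) : Prop :=
  ∀ e f : Sym2 V, e ∈ G.edgeSet → f ∈ G.edgeSet → e ≠ f →
    ∃ p ∈ P, (e ∈ p.walk.edges ∧ f ∉ p.walk.edges) ∨
      (f ∈ p.walk.edges ∧ e ∉ p.walk.edges)

/-- The weak separation number `wsp(G)`. -/
noncomputable def wsp {V : Type*} (G : SimpleGraph V) : ℕ :=
  sInf {m | ∃ P : Multiset (GPath G), IsWeakSep G P ∧ Multiset.card P = m}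

/-- `P` is a strongly separating path system of `G`. -/
def IsStrongSep {V : Type*} (G : SimpleGraph V) (P : Multiset (GPath G)) : Prop :=
  ∀ e f : Sym2 V, e ∈ G.edgeSet → f ∈ G.edgeSet → e ≠ f →
    ∃ p ∈ P, e ∈ p.walk.edges ∧ f ∉ p.walk.edges

/-- The strong separation number `ssp(G)`. -/
noncomputable def ssp {V : Type*} (G : SimpleGraph V) : ℕ :=
  sInf {m | ∃ P : Multiset (GPath G), IsStrongSep G P ∧ Multiset.card P = m}

/-- The spider with `q` legs, each of length 2: center `none`, legs
`none — some (i,0) — some (i,1)`. -/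
def spider2 (q : ℕ) : SimpleGraph (Option (Fin q × Fin 2)) :=
  SimpleGraph.fromRel (fun a b =>
    (a = none ∧ ∃ i : Fin q, b = some (i, 0)) ∨
    (∃ i : Fin q, a = some (i, 0) ∧ b = some (i, 1)))

/-!
Let each path spread a weight of `2` evenly over the (at most two) legs it meets, so that the
legs cost at most `2|P|` in total. Every leg costs at least `4`: separating its inner edge from
its leaf edge forces a path consisting of the leaf edge alone, and the inner edge lies on paths
of two colors. A leg of cost exactly `4` is met by exactly three paths, of three distinct colors,
one of which runs through the whole leg into a partner leg. With three colors the partner of such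
a cheap leg is not cheap, and a leg that is the partner of `m` cheap legs costs at least `m + 2`.
Moving `1/4` from every partner to each of its cheap legs leaves each leg with cost at least
`17/4`, so `17 q ≤ 8 |P|`.

For `c₃`, extend an optimal system by a single-edge path of another color at each monochromatic
edge; distinct monochromatic edges have distinct colors, so at most three paths are added.
-/

section RainbowSeparation

variable {V : Type*} {G : SimpleGraph V} {k : ℕ}

def IsBicolored (P : Multiset (GPath G × Fin k)) (e : Sym2 V) : Prop :=
  ∃ p ∈ P, ∃ p' ∈ P, p.2 ≠ p'.2 ∧ e ∈ p.1.walk.edges ∧ e ∈ p'.1.walk.edges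

lemma IsBicolored.mono {P P' : Multiset (GPath G × Fin k)} {e : Sym2 V} (h : IsBicolored P e)
    (hle : P ≤ P') : IsBicolored P' e := by
  obtain ⟨p, hp, p', hp', hc, hpe, hp'e⟩ := h
  exact ⟨p, Multiset.mem_of_le hle hp, p', Multiset.mem_of_le hle hp', hc, hpe, hp'e⟩

lemma GPath.exists_edges_eq_singleton {e : Sym2 V} (he : e ∈ G.edgeSet) :
    ∃ p : GPath G, p.walk.edges = [e] := by
  induction e using Sym2.ind with
  | _ a b => exact ⟨⟨a, b, he.toWalk, he.isPath_toWalk⟩, rfl⟩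

namespace IsRSPS

variable {P : Multiset (GPath G × Fin k)}

lemma mono {P' : Multiset (GPath G × Fin k)} (hP : IsRSPS G k P) (hle : P ≤ P') :
    IsRSPS G k P' := by
  intro e f he hf hne
  obtain ⟨p, hp, p', hp', h⟩ := hP e f he hf hne
  exact ⟨p, Multiset.mem_of_le hle hp, p', Multiset.mem_of_le hle hp', h⟩

lemma exists_mem_edges (hP : IsRSPS G k P) {e f : Sym2 V} (he : e ∈ G.edgeSet)
    (hf : f ∈ G.edgeSet) (hne : e ≠ f) : ∃ p ∈ P, e ∈ p.1.walk.edges := by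
  obtain ⟨p, hp, -, -, -, hpe, -⟩ := hP e f he hf hne
  exact ⟨p, hp, hpe⟩

/-- At most one edge per color is monochromatic. -/
lemma eq_of_not_isBicolored (hP : IsRSPS G k P) {e f : Sym2 V} (he : e ∈ G.edgeSet)
    (hf : f ∈ G.edgeSet) (hbe : ¬ IsBicolored P e) (hbf : ¬ IsBicolored P f)
    {p p' : GPath G × Fin k} (hp : p ∈ P) (hp' : p' ∈ P) (hpe : e ∈ p.1.walk.edges)
    (hp'f : f ∈ p'.1.walk.edges) (hc : p.2 = p'.2) : e = f := by
  by_contra hne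
  obtain ⟨r, hr, r', hr', hrr', hre, -, hr'f, -⟩ := hP e f he hf hne
  have hr_p : r.2 = p.2 := by_contra fun h => hbe ⟨r, hr, p, hp, h, hre, hpe⟩
  have hr'_p' : r'.2 = p'.2 := by_contra fun h => hbf ⟨r', hr', p', hp', h, hr'f, hp'f⟩
  exact hrr' (by rw [hr_p, hr'_p', hc])

lemma exists_isBicolored_card_le_card_add [Finite V] (hk : 2 ≤ k) (hP : IsRSPS G k P)
    (hcov : ∀ e ∈ G.edgeSet, ∃ p ∈ P, e ∈ p.1.walk.edges) :
    ∃ P' : Multiset (GPath G × Fin k), IsRSPS G k P' ∧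
      (∀ e ∈ G.edgeSet, IsBicolored P' e) ∧ Multiset.card P' ≤ Multiset.card P + k := by
  classical
  have : Nontrivial (Fin k) := Fin.nontrivial_iff_two_le.mpr hk
  have := Fintype.ofFinite G.edgeSet
  choose cov hcovP hcovE using fun e : G.edgeSet => hcov e e.2
  choose single hsingle using fun e : G.edgeSet => GPath.exists_edges_eq_singleton e.2
  choose other hother using fun c : Fin k => exists_ne c
  let M : Finset G.edgeSet := {e | ¬ IsBicolored P e}
  refine ⟨P + M.val.map fun e => (single e, other (cov e).2), hP.mono le_self_add, ?_, ?_⟩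
  · intro e he
    by_cases hb : IsBicolored P e
    · exact hb.mono le_self_add
    refine ⟨cov ⟨e, he⟩, Multiset.mem_add.mpr (Or.inl (hcovP _)),
      (single ⟨e, he⟩, other (cov ⟨e, he⟩).2), Multiset.mem_add.mpr (Or.inr ?_),
      (hother _).symm, hcovE _, by simp [hsingle]⟩
    exact Multiset.mem_map_of_mem _ (by simpa [M] using hb)
  · have hM : M.card ≤ k := by
      simpa using Finset.card_le_card_of_injOn (fun e => (cov e).2)
        (fun _ _ => Finset.mem_coe.mpr (Finset.mem_univ _)) fun e he f hf hc =>
          Subtype.ext (hP.eq_of_not_isBicolored e.2 f.2 (by simpa [M] using he)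
            (by simpa [M] using hf) (hcovP e) (hcovP f) (hcovE e) (hcovE f) hc)
    simpa using hM

end IsRSPS

lemma exists_isRSPS [Finite V] (hk : 2 ≤ k) : ∃ P : Multiset (GPath G × Fin k), IsRSPS G k P := by
  have := Fintype.ofFinite G.edgeSet
  obtain ⟨c, c', hc⟩ := (Fin.nontrivial_iff_two_le.mpr hk).exists_pair_ne
  choose single hsingle using fun e : G.edgeSet => GPath.exists_edges_eq_singleton e.2
  refine ⟨(Finset.univ.val.map fun e => (single e, c)) +
      Finset.univ.val.map fun e => (single e, c'),
    fun e f he hf hne => ⟨(single ⟨e, he⟩, c), by simp, (single ⟨f, hf⟩, c'), by simp, hc, ?_⟩⟩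
  simp [hsingle, hne, Ne.symm hne]

lemma exists_isRSPS_isBicolored_card_le_cRSPS_add [Finite V] (hk : 2 ≤ k)
    (hG : ∀ e ∈ G.edgeSet, ∃ f ∈ G.edgeSet, e ≠ f) :
    ∃ P : Multiset (GPath G × Fin k), IsRSPS G k P ∧ (∀ e ∈ G.edgeSet, IsBicolored P e) ∧
      Multiset.card P ≤ cRSPS G k + k := by
  obtain ⟨P₀, hP₀⟩ := exists_isRSPS (G := G) hk
  obtain ⟨P, hP, hcard⟩ : cRSPS G k ∈ {m | ∃ P, IsRSPS G k P ∧ Multiset.card P = m} :=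
    Nat.sInf_mem ⟨_, P₀, hP₀, rfl⟩
  have hcov : ∀ e ∈ G.edgeSet, ∃ p ∈ P, e ∈ p.1.walk.edges := fun e he =>
    let ⟨_, hf, hne⟩ := hG e he
    hP.exists_mem_edges he hf hne
  obtain ⟨P', hP', hbi, hle⟩ := hP.exists_isBicolored_card_le_card_add hk hcov
  exact ⟨P', hP', hbi, hcard ▸ hle⟩

end RainbowSeparation

lemma SimpleGraph.Walk.IsPath.exists_forall_eq_or_eq_of_mem_edges {V : Type*}
    {G : SimpleGraph V} {u v : V} {p : G.Walk u v} (hp : p.IsPath) (x : V) :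
    ∃ a b : V, ∀ w, s(x, w) ∈ p.edges → w = a ∨ w = b := by
  classical
  by_cases hx : x ∈ p.support
  · refine ⟨(p.takeUntil x hx).penultimate, (p.dropUntil x hx).snd, fun w hw => ?_⟩
    rw [← p.take_spec hx, edges_append, List.mem_append] at hw
    exact hw.imp (hp.takeUntil hx).eq_penultimate_of_mem_edges
      (hp.dropUntil hx).eq_snd_of_mem_edges
  · exact ⟨x, x, fun w hw => absurd (p.fst_mem_support_of_mem_edges hw) hx⟩

lemma Multiset.exists_eq_cons_cons_cons {α : Type*} {a b c : α} {s : Multiset α} (ha : a ∈ s)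
    (hb : b ∈ s) (hc : c ∈ s) (hab : a ≠ b) (hac : a ≠ c) (hbc : b ≠ c) :
    ∃ t, s = a ::ₘ b ::ₘ c ::ₘ t := by
  obtain ⟨s, rfl⟩ := Multiset.exists_cons_of_mem ha
  obtain ⟨s, rfl⟩ := Multiset.exists_cons_of_mem ((Multiset.mem_cons.mp hb).resolve_left hab.symm)
  obtain ⟨s, rfl⟩ := Multiset.exists_cons_of_mem (by simpa [hac.symm, hbc.symm] using hc)
  exact ⟨s, rfl⟩

namespace Spider2

variable {q : ℕ}

def innerEdge (i : Fin q) : Sym2 (Option (Fin q × Fin 2)) := s(none, some (i, 0))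

def outerEdge (i : Fin q) : Sym2 (Option (Fin q × Fin 2)) := s(some (i, 0), some (i, 1))

@[simp] lemma innerEdge_inj {i j : Fin q} : innerEdge i = innerEdge j ↔ i = j := by
  simp [innerEdge]

@[simp] lemma outerEdge_inj {i j : Fin q} : outerEdge i = outerEdge j ↔ i = j := by
  simp [outerEdge]

@[simp] lemma innerEdge_ne_outerEdge (i j : Fin q) : innerEdge i ≠ outerEdge j := by
  simp [innerEdge, outerEdge]

@[simp] lemma outerEdge_ne_innerEdge (i j : Fin q) : outerEdge i ≠ innerEdge j :=
  (innerEdge_ne_outerEdge j i).symm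

lemma mem_edgeSet_iff {e : Sym2 (Option (Fin q × Fin 2))} :
    e ∈ (spider2 q).edgeSet ↔ ∃ i, e = innerEdge i ∨ e = outerEdge i := by
  induction e using Sym2.ind with
  | _ a b =>
    simp only [mem_edgeSet, spider2, fromRel_adj, innerEdge, outerEdge, Sym2.eq_iff]
    grind

lemma innerEdge_mem_edgeSet (i : Fin q) : innerEdge i ∈ (spider2 q).edgeSet :=
  mem_edgeSet_iff.mpr ⟨i, Or.inl rfl⟩

lemma outerEdge_mem_edgeSet (i : Fin q) : outerEdge i ∈ (spider2 q).edgeSet :=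
  mem_edgeSet_iff.mpr ⟨i, Or.inr rfl⟩

lemma exists_ne_mem_edgeSet {e : Sym2 (Option (Fin q × Fin 2))} (he : e ∈ (spider2 q).edgeSet) :
    ∃ f ∈ (spider2 q).edgeSet, e ≠ f := by
  obtain ⟨i, rfl | rfl⟩ := mem_edgeSet_iff.mp he
  · exact ⟨outerEdge i, outerEdge_mem_edgeSet i, innerEdge_ne_outerEdge i i⟩
  · exact ⟨innerEdge i, innerEdge_mem_edgeSet i, outerEdge_ne_innerEdge i i⟩

def OnLeg (i : Fin q) (v : Option (Fin q × Fin 2)) : Prop := ∃ t, v = some (i, t)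

lemma onLeg_iff_of_adj {i : Fin q} {a b : Option (Fin q × Fin 2)} (h : (spider2 q).Adj a b)
    (hne : s(a, b) ≠ innerEdge i) : OnLeg i a ↔ OnLeg i b := by
  obtain ⟨j, hj | hj⟩ := mem_edgeSet_iff.mp ((spider2 q).mem_edgeSet.mpr h) <;>
    rcases Sym2.eq_iff.mp hj with ⟨rfl, rfl⟩ | ⟨rfl, rfl⟩ <;>
    simp [OnLeg, innerEdge] at hne ⊢ <;> grind

lemma onLeg_iff_of_mem_support {i : Fin q} {a b v : Option (Fin q × Fin 2)}
    (W : (spider2 q).Walk a b) (hW : innerEdge i ∉ W.edges) (hv : v ∈ W.support) :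
    OnLeg i v ↔ OnLeg i a := by
  induction W with
  | nil => rw [Walk.mem_support_nil_iff.mp hv]
  | cons h W ih =>
    rw [Walk.edges_cons, List.mem_cons, not_or] at hW
    rcases List.mem_cons.mp (Walk.support_cons h W ▸ hv) with rfl | hv
    · rfl
    · exact (ih hW.2 hv).trans (onLeg_iff_of_adj h (Ne.symm hW.1)).symm

/-- Deleting the inner edge of a leg cuts the leg off the rest of the spider. -/
lemma eq_outerEdge_of_mem_edges {i : Fin q} {a b : Option (Fin q × Fin 2)}
    (W : (spider2 q).Walk a b) (hE : innerEdge i ∉ W.edges) (hF : outerEdge i ∈ W.edges)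
    {e : Sym2 (Option (Fin q × Fin 2))} (he : e ∈ W.edges) : e = outerEdge i := by
  have hleg : ∀ v ∈ W.support, OnLeg i v := fun v hv =>
    (onLeg_iff_of_mem_support W hE hv).mpr
      ((onLeg_iff_of_mem_support W hE (W.snd_mem_support_of_mem_edges hF)).mp ⟨1, rfl⟩)
  obtain ⟨j, rfl | rfl⟩ := mem_edgeSet_iff.mp (W.edges_subset_edgeSet he)
  · obtain ⟨t, ht⟩ := hleg none (W.fst_mem_support_of_mem_edges he)
    exact absurd ht (Option.some_ne_none _).symm
  · obtain ⟨t, ht⟩ := hleg _ (W.snd_mem_support_of_mem_edges he)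
    simp_all

lemma edges_eq_outerEdge {i : Fin q} {a b : Option (Fin q × Fin 2)}
    {W : (spider2 q).Walk a b} (hW : W.IsPath) (hE : innerEdge i ∉ W.edges)
    (hF : outerEdge i ∈ W.edges) : W.edges = [outerEdge i] := by
  have h := List.eq_replicate_of_mem fun e he => eq_outerEdge_of_mem_edges W hE hF he
  have hlen : W.edges.length ≤ 1 := List.nodup_replicate.mp (h ▸ hW.isTrail.edges_nodup)
  have hpos : 0 < W.edges.length := List.length_pos_of_mem hF
  rw [h, show W.edges.length = 1 by omega, List.replicate_one]

def legs (p : GPath (spider2 q)) : Finset (Fin q) :=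
  {i | innerEdge i ∈ p.walk.edges ∨ outerEdge i ∈ p.walk.edges}

lemma mem_legs {p : GPath (spider2 q)} {i : Fin q} :
    i ∈ legs p ↔ innerEdge i ∈ p.walk.edges ∨ outerEdge i ∈ p.walk.edges := by
  simp [legs]

lemma innerEdge_mem_of_mem_legs {p : GPath (spider2 q)} {i j : Fin q} (hi : i ∈ legs p)
    (hj : j ∈ legs p) (hij : i ≠ j) : innerEdge i ∈ p.walk.edges := by
  by_contra hE
  have hF := (mem_legs.mp hi).resolve_left hE
  rcases mem_legs.mp hj with hj | hj
  · exact innerEdge_ne_outerEdge j i (eq_outerEdge_of_mem_edges p.walk hE hF hj)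
  · exact hij (outerEdge_inj.mp (eq_outerEdge_of_mem_edges p.walk hE hF hj)).symm

/-- A path uses at most two edges at the center. -/
lemma card_legs_le_two (p : GPath (spider2 q)) : (legs p).card ≤ 2 := by
  by_contra! h
  obtain ⟨i, hi, j, hj, l, hl, hij, hil, hjl⟩ := Finset.two_lt_card.mp h
  obtain ⟨a, b, hab⟩ := p.isPath.exists_forall_eq_or_eq_of_mem_edges none
  have := hab _ (innerEdge_mem_of_mem_legs hi hj hij)
  have := hab _ (innerEdge_mem_of_mem_legs hj hi hij.symm)
  have := hab _ (innerEdge_mem_of_mem_legs hl hi hil.symm)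
  grind

/-- `p` spreads a weight of `2` evenly over the legs it meets; there are at most two of them, so
the division is exact. -/
def weight (i : Fin q) (p : GPath (spider2 q)) : ℕ :=
  if i ∈ legs p then 2 / (legs p).card else 0

lemma sum_weight_le_two (p : GPath (spider2 q)) : ∑ i, weight i p ≤ 2 := by
  simp only [weight]
  rw [Finset.sum_ite_mem, Finset.univ_inter, Finset.sum_const, smul_eq_mul]
  exact Nat.mul_div_le 2 _

lemma one_le_weight {i : Fin q} {p : GPath (spider2 q)} (hi : i ∈ legs p) : 1 ≤ weight i p := by
  have hpos := Finset.card_pos.mpr ⟨i, hi⟩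
  have := card_legs_le_two p
  rw [weight, if_pos hi, Nat.le_div_iff_mul_le hpos]
  omega

lemma weight_eq_two {i : Fin q} {p : GPath (spider2 q)} (hp : p.walk.edges = [outerEdge i]) :
    weight i p = 2 := by
  have hlegs : legs p = {i} := by
    ext j
    simp [mem_legs, hp, eq_comm]
  simp [weight, hlegs]

lemma exists_legs_eq_pair {i : Fin q} {p : GPath (spider2 q)} (h : weight i p = 1) :
    ∃ j ≠ i, legs p = {i, j} := by
  have hi : i ∈ legs p := by
    by_contra hi
    simp [weight, hi] at h
  have hcard : (legs p).card = 2 := by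
    have := card_legs_le_two p
    rw [weight, if_pos hi] at h
    interval_cases (legs p).card <;> simp_all
  obtain ⟨a, b, hab, hp⟩ := Finset.card_eq_two.mp hcard
  rw [hp, Finset.mem_insert, Finset.mem_singleton] at hi
  rcases hi with rfl | rfl
  · exact ⟨b, hab.symm, hp⟩
  · exact ⟨a, hab, hp.trans (Finset.pair_comm _ _)⟩

variable {k : ℕ}

def cost (P : Multiset (GPath (spider2 q) × Fin k)) (i : Fin q) : ℕ :=
  (P.map fun x => weight i x.1).sum

lemma sum_cost_le (P : Multiset (GPath (spider2 q) × Fin k)) :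
    ∑ i, cost P i ≤ 2 * Multiset.card P := by
  simp only [cost]
  rw [← Multiset.sum_map_sum, mul_comm, ← smul_eq_mul,
    ← Multiset.card_map fun x => ∑ i, weight i x.1]
  refine Multiset.sum_le_card_nsmul _ _ fun n hn => ?_
  obtain ⟨x, -, rfl⟩ := Multiset.mem_map.mp hn
  exact sum_weight_le_two x.1

lemma not_mem_legs_of_cost_eq_zero {R : Multiset (GPath (spider2 q) × Fin k)} {i : Fin q}
    (h : cost R i = 0) {z : GPath (spider2 q) × Fin k} (hz : z ∈ R) : i ∉ legs z.1 := fun hzi => by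
  have := Multiset.le_sum_of_mem (Multiset.mem_map_of_mem (fun x => weight i x.1) hz)
  have := one_le_weight hzi
  simp only [cost] at h
  omega

variable {P : Multiset (GPath (spider2 q) × Fin k)}

lemma exists_leafPath (hP : IsRSPS (spider2 q) k P) (i : Fin q) :
    ∃ s ∈ P, s.1.walk.edges = [outerEdge i] ∧
      ∃ u ∈ P, innerEdge i ∈ u.1.walk.edges ∧ outerEdge i ∉ u.1.walk.edges ∧ u.2 ≠ s.2 := by
  obtain ⟨u, hu, s, hs, hc, huE, huF, hsF, hsE⟩ :=
    hP _ _ (innerEdge_mem_edgeSet i) (outerEdge_mem_edgeSet i) (innerEdge_ne_outerEdge i i)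
  exact ⟨s, hs, edges_eq_outerEdge s.1.isPath hsE hsF, u, hu, huE, huF, hc⟩

lemma exists_eq_cons_leafPath (hP : IsRSPS (spider2 q) k P)
    (hbi : ∀ e ∈ (spider2 q).edgeSet, IsBicolored P e) (i : Fin q) :
    ∃ s y₁ y₂ R, P = s ::ₘ y₁ ::ₘ y₂ ::ₘ R ∧ s.1.walk.edges = [outerEdge i] ∧
      innerEdge i ∈ y₁.1.walk.edges ∧ innerEdge i ∈ y₂.1.walk.edges ∧ y₁.2 ≠ y₂.2 ∧
      cost P i = 2 + weight i y₁.1 + weight i y₂.1 + cost R i := by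
  obtain ⟨s, hs, hse, -⟩ := exists_leafPath hP i
  obtain ⟨y₁, hy₁, y₂, hy₂, hc, h₁, h₂⟩ := hbi _ (innerEdge_mem_edgeSet i)
  have hne : ∀ y : GPath (spider2 q) × Fin k, innerEdge i ∈ y.1.walk.edges → s ≠ y :=
    fun y hy h => by subst h; simp [hse] at hy
  obtain ⟨R, rfl⟩ := Multiset.exists_eq_cons_cons_cons hs hy₁ hy₂ (hne _ h₁) (hne _ h₂)
    (fun h => hc (congrArg Prod.snd h))
  refine ⟨s, y₁, y₂, R, rfl, hse, h₁, h₂, hc, ?_⟩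
  simp [cost, weight_eq_two hse]
  ring

lemma four_le_cost (hP : IsRSPS (spider2 q) k P)
    (hbi : ∀ e ∈ (spider2 q).edgeSet, IsBicolored P e) (i : Fin q) : 4 ≤ cost P i := by
  obtain ⟨s, y₁, y₂, R, -, -, h₁, h₂, -, hcost⟩ := exists_eq_cons_leafPath hP hbi i
  have := one_le_weight (mem_legs.mpr (Or.inl h₁))
  have := one_le_weight (mem_legs.mpr (Or.inl h₂))
  omega

/-- The shape of a leg `i` of cost `4`: it is met only by the leaf path `s`, a path `t` running
through the whole leg into the inner edge of a partner leg `j`, and a path `u` using the inner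
edge of `i` but not its outer edge, and these three have distinct colors. -/
structure IsCheapLeg (P : Multiset (GPath (spider2 q) × Fin k)) (i j : Fin q)
    (s t u : GPath (spider2 q) × Fin k) : Prop where
  partner_ne : j ≠ i
  through_mem : t ∈ P
  eq_of_mem_legs : ∀ z ∈ P, i ∈ legs z.1 → z = s ∨ z = t ∨ z = u
  leaf_edges : s.1.walk.edges = [outerEdge i]
  legs_through : legs t.1 = {i, j}
  outerEdge_mem_through : outerEdge i ∈ t.1.walk.edges
  outerEdge_not_mem_stub : outerEdge i ∉ u.1.walk.edges
  leaf_ne_through : s.2 ≠ t.2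
  leaf_ne_stub : s.2 ≠ u.2
  through_ne_stub : t.2 ≠ u.2

lemma exists_isCheapLeg (hP : IsRSPS (spider2 q) k P)
    (hbi : ∀ e ∈ (spider2 q).edgeSet, IsBicolored P e) {i : Fin q} (h4 : cost P i ≤ 4) :
    ∃ j s t u, IsCheapLeg P i j s t u := by
  obtain ⟨s, y₁, y₂, R, rfl, hse, h₁, h₂, hc, hcost⟩ := exists_eq_cons_leafPath hP hbi i
  have hw₁ := one_le_weight (mem_legs.mpr (Or.inl h₁))
  have hw₂ := one_le_weight (mem_legs.mpr (Or.inl h₂))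
  have hR : cost R i = 0 := by omega
  have htouch : ∀ z ∈ s ::ₘ y₁ ::ₘ y₂ ::ₘ R, i ∈ legs z.1 → z = s ∨ z = y₁ ∨ z = y₂ := by
    intro z hz hzi
    simp only [Multiset.mem_cons] at hz
    grind [not_mem_legs_of_cost_eq_zero hR]
  obtain ⟨s', hs', hs'e, u, hu, huE, huF, hus'⟩ := exists_leafPath hP i
  have hs's : s' = s := by
    rcases htouch s' hs' (by simp [mem_legs, hs'e]) with h | rfl | rfl
    · exact h
    all_goals simp [hs'e] at h₁ h₂
  subst hs's
  obtain ⟨x, hx, x', hx', hxx', hxF, hx'F⟩ := hbi _ (outerEdge_mem_edgeSet i)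
  obtain ⟨t, ht, htF, hst⟩ : ∃ t ∈ s' ::ₘ y₁ ::ₘ y₂ ::ₘ R,
      outerEdge i ∈ t.1.walk.edges ∧ s'.2 ≠ t.2 := by
    by_cases h : s'.2 = x.2
    · exact ⟨x', hx', hx'F, h ▸ hxx'⟩
    · exact ⟨x, hx, hxF, h⟩
  have hyt : t = y₁ ∧ u = y₂ ∨ t = y₂ ∧ u = y₁ := by
    have := htouch t ht (mem_legs.mpr (Or.inr htF))
    have := htouch u hu (mem_legs.mpr (Or.inl huE))
    have : t ≠ u := fun h => huF (h ▸ htF)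
    grind
  have hwt : weight i t.1 = 1 := by
    rcases hyt with ⟨rfl, rfl⟩ | ⟨rfl, rfl⟩ <;> omega
  obtain ⟨j, hji, hlegs⟩ := exists_legs_eq_pair hwt
  refine ⟨j, s', t, u, hji, ht, fun z hz hzi => ?_, hse, hlegs, htF, huF, hst, hus'.symm, ?_⟩
  · rcases hyt with ⟨rfl, rfl⟩ | ⟨rfl, rfl⟩ <;> grind [htouch z hz hzi]
  · rcases hyt with ⟨rfl, rfl⟩ | ⟨rfl, rfl⟩
    exacts [hc, hc.symm]

namespace IsCheapLeg

variable {i j : Fin q} {s t u z : GPath (spider2 q) × Fin k}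

lemma innerEdge_mem_through (h : IsCheapLeg P i j s t u) : innerEdge i ∈ t.1.walk.edges :=
  innerEdge_mem_of_mem_legs (by simp [h.legs_through]) (by simp [h.legs_through])
    h.partner_ne.symm

lemma innerEdge_partner_mem_through (h : IsCheapLeg P i j s t u) :
    innerEdge j ∈ t.1.walk.edges :=
  innerEdge_mem_of_mem_legs (by simp [h.legs_through]) (by simp [h.legs_through]) h.partner_ne

lemma eq_leaf (h : IsCheapLeg P i j s t u) (hz : z ∈ P) (hzF : outerEdge i ∈ z.1.walk.edges)
    {e : Sym2 (Option (Fin q × Fin 2))} (he : e ∈ t.1.walk.edges) (hze : e ∉ z.1.walk.edges) :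
    z = s := by
  rcases h.eq_of_mem_legs z hz (mem_legs.mpr (Or.inr hzF)) with rfl | rfl | rfl
  · rfl
  · exact absurd he hze
  · exact absurd hzF h.outerEdge_not_mem_stub

lemma eq_stub (h : IsCheapLeg P i j s t u) (hz : z ∈ P) (hzE : innerEdge i ∈ z.1.walk.edges)
    {e : Sym2 (Option (Fin q × Fin 2))} (he : e ∈ t.1.walk.edges) (hze : e ∉ z.1.walk.edges) :
    z = u := by
  rcases h.eq_of_mem_legs z hz (mem_legs.mpr (Or.inl hzE)) with rfl | rfl | rfl
  · simp [h.leaf_edges] at hzE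
  · exact absurd he hze
  · rfl

lemma eq_through (h : IsCheapLeg P i j s t u) (hz : z ∈ P) (hzE : innerEdge i ∈ z.1.walk.edges)
    {e : Sym2 (Option (Fin q × Fin 2))} (he : e ∈ u.1.walk.edges) (hze : e ∉ z.1.walk.edges) :
    z = t := by
  rcases h.eq_of_mem_legs z hz (mem_legs.mpr (Or.inl hzE)) with rfl | rfl | rfl
  · simp [h.leaf_edges] at hzE
  · rfl
  · exact absurd he hze

end IsCheapLeg

/-- Separating the edges of the two legs would need a path at the partner of a fourth color. -/
lemma IsCheapLeg.not_isCheapLeg_partner {P : Multiset (GPath (spider2 q) × Fin 3)}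
    (hP : IsRSPS (spider2 q) 3 P) {i j l : Fin q} {s t u s' t' u' : GPath (spider2 q) × Fin 3}
    (hi : IsCheapLeg P i j s t u) (hj : IsCheapLeg P j l s' t' u') : False := by
  have := hi.leaf_ne_through
  have := hi.leaf_ne_stub
  have := hi.through_ne_stub
  have htj : j ∈ legs t.1 := by simp [hi.legs_through]
  rcases hj.eq_of_mem_legs t hi.through_mem htj with rfl | rfl | rfl
  · exact absurd hi.innerEdge_mem_through (by simp [hj.leaf_edges])
  · obtain ⟨p, hp, p', hp', hc, hpF, hpF', hp'F', hp'F⟩ := hP _ _ (outerEdge_mem_edgeSet i)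
      (outerEdge_mem_edgeSet j) (by simpa using hi.partner_ne.symm)
    have hss' : s.2 ≠ s'.2 := by
      rwa [← hi.eq_leaf hp hpF hj.outerEdge_mem_through hpF',
        ← hj.eq_leaf hp' hp'F' hi.outerEdge_mem_through hp'F]
    obtain ⟨p, hp, p', hp', hc, hpE, hpF', hp'F', hp'E⟩ := hP _ _ (innerEdge_mem_edgeSet i)
      (outerEdge_mem_edgeSet j) (innerEdge_ne_outerEdge i j)
    have hus' : u.2 ≠ s'.2 := by
      rwa [← hi.eq_stub hp hpE hj.outerEdge_mem_through hpF',
        ← hj.eq_leaf hp' hp'F' hi.innerEdge_mem_through hp'E]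
    have := hj.leaf_ne_through
    omega
  · obtain ⟨p, hp, p', hp', hc, hpE, hpE', hp'E', hp'E⟩ := hP _ _ (innerEdge_mem_edgeSet i)
      (innerEdge_mem_edgeSet j) (by simpa using hi.partner_ne.symm)
    have hut' : u.2 ≠ t'.2 := by
      rwa [← hi.eq_stub hp hpE hi.innerEdge_partner_mem_through hpE',
        ← hj.eq_through hp' hp'E' hi.innerEdge_mem_through hp'E]
    obtain ⟨p, hp, p', hp', hc, hpF, hpE', hp'E', hp'F⟩ := hP _ _ (outerEdge_mem_edgeSet i)
      (innerEdge_mem_edgeSet j) (outerEdge_ne_innerEdge i j)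
    have hst' : s.2 ≠ t'.2 := by
      rwa [← hi.eq_leaf hp hpF hi.innerEdge_partner_mem_through hpE',
        ← hj.eq_through hp' hp'E' hi.outerEdge_mem_through hp'F]
    have := hj.through_ne_stub
    omega

/-- The leaf path of a leg `j` together with the through paths of the cheap legs with
partner `j` are distinct paths meeting `j`. -/
lemma card_add_two_le_cost (hP : IsRSPS (spider2 q) k P) {j : Fin q} (F : Finset (Fin q))
    {s t u : Fin q → GPath (spider2 q) × Fin k} (hF : ∀ i ∈ F, IsCheapLeg P i j (s i) (t i) (u i)) :
    F.card + 2 ≤ cost P j := by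
  obtain ⟨s', hs', hs'e, -⟩ := exists_leafPath hP j
  have hinj : Set.InjOn t F := fun i hi i' hi' h => by
    have : i ∈ legs (t i').1 := by simp [← h, (hF i hi).legs_through]
    simp only [(hF i' hi').legs_through, Finset.mem_insert, Finset.mem_singleton] at this
    exact this.resolve_right (hF i hi).partner_ne.symm
  have hnodup : (s' ::ₘ F.val.map t).Nodup := by
    refine Multiset.nodup_cons.mpr ⟨fun h => ?_, F.nodup.map_on fun i hi i' hi' => hinj hi hi'⟩
    obtain ⟨i, hi, hti⟩ := Multiset.mem_map.mp h
    have := (hF i hi).innerEdge_partner_mem_through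
    rw [hti, hs'e] at this
    simp at this
  obtain ⟨R, hR⟩ := Multiset.le_iff_exists_add.mp <| (Multiset.le_iff_subset hnodup).mpr <|
    Multiset.cons_subset.mpr ⟨hs', fun x hx => by
      obtain ⟨i, hi, rfl⟩ := Multiset.mem_map.mp hx
      exact (hF i hi).through_mem⟩
  have hsum : F.card ≤ ∑ i ∈ F, weight j (t i).1 := by
    simpa using Finset.card_nsmul_le_sum F _ 1 fun i hi =>
      one_le_weight (by simp [(hF i hi).legs_through])
  have hcost : cost P j = 2 + ∑ i ∈ F, weight j (t i).1 + cost R j := by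
    simp [cost, hR, weight_eq_two hs'e, Multiset.map_map]
    ring
  omega

/-- Discharging, with costs scaled by `4`: each `i ∈ C` receives one unit from `f i`. -/
lemma seventeen_mul_card_le_four_mul_sum {ι : Type*} [Fintype ι] [DecidableEq ι] (c : ι → ℕ)
    (C : Finset ι) (f : ι → ι) (h4 : ∀ j ∈ C, 4 ≤ c j) (h5 : ∀ j ∉ C, 5 ≤ c j)
    (hf : ∀ i ∈ C, f i ∉ C) (hfib : ∀ j, ({i ∈ C | f i = j} : Finset ι).card + 2 ≤ c j) :
    17 * Fintype.card ι ≤ 4 * ∑ j, c j := by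
  have key : ∀ j, 17 + ({i ∈ C | f i = j} : Finset ι).card ≤ 4 * c j + if j ∈ C then 1 else 0 := by
    intro j
    by_cases hj : j ∈ C
    · have : {i ∈ C | f i = j} = ∅ :=
        Finset.filter_eq_empty_iff.mpr fun i hi h => hf i hi (h ▸ hj)
      simp only [this, Finset.card_empty, if_pos hj]
      linarith [h4 j hj]
    · have := h5 j hj
      have := hfib j
      simp only [if_neg hj]
      omega
  have hsum := Finset.sum_le_sum fun j (_ : j ∈ Finset.univ) => key j
  rw [Finset.sum_add_distrib, Finset.sum_add_distrib,
    ← Finset.card_eq_sum_card_fiberwise fun i _ => Finset.mem_univ (f i)] at hsum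
  simp [Finset.mul_sum] at hsum ⊢
  omega

lemma seventeen_mul_le_eight_mul_card {P : Multiset (GPath (spider2 q) × Fin 3)}
    (hP : IsRSPS (spider2 q) 3 P) (hbi : ∀ e ∈ (spider2 q).edgeSet, IsBicolored P e) :
    17 * q ≤ 8 * Multiset.card P := by
  classical
  have hcheap : ∀ i, ∃ j s t u, cost P i ≤ 4 → IsCheapLeg P i j s t u := fun i => by
    by_cases h : cost P i ≤ 4
    · obtain ⟨j, s, t, u, h⟩ := exists_isCheapLeg hP hbi h
      exact ⟨j, s, t, u, fun _ => h⟩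
    · let x : GPath (spider2 q) × Fin 3 := (⟨none, none, .nil, .nil⟩, 0)
      exact ⟨i, x, x, x, fun h' => absurd h' h⟩
  choose partner s t u hcheap using hcheap
  have := seventeen_mul_card_le_four_mul_sum (cost P) {i | cost P i ≤ 4} partner
    (fun j _ => four_le_cost hP hbi j) (fun j hj => by simpa [Nat.succ_le_iff] using hj)
    (fun i hi hfi => (hcheap i (by simpa using hi)).not_isCheapLeg_partner hP
      (hcheap _ (by simpa using hfi)))
    (fun j => card_add_two_le_cost hP _ fun i hi => by
      obtain ⟨hi, rfl⟩ := Finset.mem_filter.mp hi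
      exact hcheap i (by simpa using hi))
  have := sum_cost_le P
  simp only [Fintype.card_fin] at *
  omega

end Spider2

theorem stmt13_general (q n : ℕ) (hn : n = 2 * q + 1) :
    (∀ P : Multiset (GPath (spider2 q) × Fin 3), IsRSPS (spider2 q) 3 P →
      (∀ e ∈ (spider2 q).edgeSet, ∃ p ∈ P, ∃ p' ∈ P, p.2 ≠ p'.2 ∧
        e ∈ p.1.walk.edges ∧ e ∈ p'.1.walk.edges) →
      17 * ((n : ℝ) - 1) / 16 ≤ (Multiset.card P : ℝ)) ∧
    17 * ((n : ℝ) - 1) / 16 - 3 ≤ (cRSPS (spider2 q) 3 : ℝ) := by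
  subst hn
  have hbound (P : Multiset (GPath (spider2 q) × Fin 3)) (hP : IsRSPS (spider2 q) 3 P)
      (hbi : ∀ e ∈ (spider2 q).edgeSet, IsBicolored P e) :
      17 * (((2 * q + 1 : ℕ) : ℝ) - 1) / 16 ≤ Multiset.card P := by
    have : (17 * q : ℝ) ≤ 8 * Multiset.card P := by
      exact_mod_cast Spider2.seventeen_mul_le_eight_mul_card hP hbi
    push_cast
    linarith
  refine ⟨hbound, ?_⟩
  obtain ⟨P, hP, hbi, hcard⟩ := exists_isRSPS_isBicolored_card_le_cRSPS_add (G := spider2 q)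
    (k := 3) (by norm_num) fun e he => Spider2.exists_ne_mem_edgeSet he
  have : (Multiset.card P : ℝ) ≤ cRSPS (spider2 q) 3 + 3 := by exact_mod_cast hcard
  linarith [hbound P hP hbi]

/-- For the spider with `q ≥ 3` legs, all of length 2
(`n = 2q+1` vertices): any 3-RSPS in which every edge is covered by paths of at
least two distinct colors has size at least `17(n−1)/16`; consequently
`c_3(S) ≥ 17(n−1)/16 − 3`. -/
theorem stmt13 (q n : ℕ) (hq : 3 ≤ q) (hn : n = 2 * q + 1) :
    (∀ P : Multiset (GPath (spider2 q) × Fin 3), IsRSPS (spider2 q) 3 P →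
      (∀ e ∈ (spider2 q).edgeSet, ∃ p ∈ P, ∃ p' ∈ P, p.2 ≠ p'.2 ∧
        e ∈ p.1.walk.edges ∧ e ∈ p'.1.walk.edges) →
      17 * ((n : ℝ) - 1) / 16 ≤ (Multiset.card P : ℝ)) ∧
    17 * ((n : ℝ) - 1) / 16 - 3 ≤ (cRSPS (spider2 q) 3 : ℝ) :=
  stmt13_general q n hn
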